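/- For all τ ∈ ℍ and all z = (z₁,…,z₁₂) ∈ ℂ^{12} one has the halving identity φ11(τ/2, z) = φ01(τ,z)·φ11(τ,z), where τ/2 ∈ ℍ. -/

import Mathlib

open Complex

/-- `ee w = exp(2πiw)`; thus `q^r = ee (r·τ)` and `ζ^r = ee (r·u)`. -/
noncomputable def ee (w : ℂ) : ℂ := Complex.exp (2 * Real.pi * Complex.I * w)

/-- The Dedekind eta function `η(τ) = q^{1/24} ∏_{n≥1} (1 − qⁿ)`. -/
noncomputable def dedekindEta (τ : UpperHalfPlane) : ℂ :=
  ee ((τ : ℂ) / 24) * ∏' n : ℕ, (1 - ee (((n : ℂ) + 1) * (τ : ℂ)))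

/-- `ϑ11(τ,u) = −q^{1/8} ζ^{−1/2} ∏_{n≥1} (1−q^{n−1}ζ)(1−qⁿζ^{−1})(1−qⁿ)`. -/
noncomputable def th11 (τ : UpperHalfPlane) (u : ℂ) : ℂ :=
  -(ee ((τ : ℂ) / 8) * ee (-u / 2)) *
    ∏' n : ℕ, ((1 - ee ((n : ℂ) * (τ : ℂ)) * ee u) *
      (1 - ee (((n : ℂ) + 1) * (τ : ℂ)) * ee (-u)) * (1 - ee (((n : ℂ) + 1) * (τ : ℂ))))

/-- `ϑ01(τ,u) = ∏_{n≥1} (1−qⁿ)(1−q^{n−1/2}ζ)(1−q^{n−1/2}ζ^{−1})`. -/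
noncomputable def th01 (τ : UpperHalfPlane) (u : ℂ) : ℂ :=
  ∏' n : ℕ, ((1 - ee (((n : ℂ) + 1) * (τ : ℂ))) *
    (1 - ee (((n : ℂ) + 1 / 2) * (τ : ℂ)) * ee u) *
    (1 - ee (((n : ℂ) + 1 / 2) * (τ : ℂ)) * ee (-u)))

/-- `φ01(τ,z) = η(τ)^{−12} ∏_{j=1}^{12} ϑ01(τ,z_j)`. -/
noncomputable def phi01 (τ : UpperHalfPlane) (z : Fin 12 → ℂ) : ℂ :=
  (dedekindEta τ ^ 12)⁻¹ * ∏ j, th01 τ (z j)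

/-- `φ11(τ,z) = η(τ)^{−12} ∏_{j=1}^{12} ϑ11(τ,z_j)`. -/
noncomputable def phi11 (τ : UpperHalfPlane) (z : Fin 12 → ℂ) : ℂ :=
  (dedekindEta τ ^ 12)⁻¹ * ∏ j, th11 τ (z j)

/-- `τ/2` as a point of the upper half-plane. -/
noncomputable def halfH (τ : UpperHalfPlane) : UpperHalfPlane :=
  ⟨(τ : ℂ) / 2, by
    have h := τ.im_pos
    rw [Complex.div_im]
    simp [UpperHalfPlane.coe_im]
    positivity⟩

/-! Put `q = e(τ)` and `x = e(τ/2)`, so `x² = q`. Every product in sight is an infinite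
`q`-Pochhammer symbol `(a; y)_∞ = ∏ (1 - a yⁿ)` with `y = q` or `y = x`, and splitting the
indices by parity gives `(a; x)_∞ = (a; q)_∞ (a x; q)_∞`. After this splitting the factors of
`ϑ11(τ/2,u) η(τ)²` and of `η(τ/2) ϑ01(τ,u) ϑ11(τ,u)` coincide, including the prefactors
`q^{1/16 + 1/12} = q^{1/48 + 1/8}`. Taking the product over the twelve coordinates, the
resulting factor `(η(τ/2) / η(τ)²)¹²` turns `η(τ/2)⁻¹²` into `η(τ)⁻²⁴`. -/

lemma ee_add (a b : ℂ) : ee (a + b) = ee a * ee b := by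
  simp only [ee, mul_add, Complex.exp_add]

lemma ee_nat_mul (n : ℕ) (w : ℂ) : ee (n * w) = ee w ^ n := by
  rw [ee, ee, ← Complex.exp_nat_mul]
  ring_nf

lemma norm_ee_lt_one {w : ℂ} (hw : 0 < w.im) : ‖ee w‖ < 1 := by
  have : (2 * Real.pi * I * w).re = -(2 * Real.pi * w.im) := by
    simp [Complex.mul_re, Complex.mul_im]
  rw [ee, Complex.norm_exp, Real.exp_lt_one_iff, this]
  have := Real.pi_pos
  nlinarith

lemma ee_half_sq (w : ℂ) : ee (w / 2) ^ 2 = ee w := by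
  rw [← ee_nat_mul]
  ring_nf

noncomputable def qPochhammer (a q : ℂ) : ℂ := ∏' n : ℕ, (1 - a * q ^ n)

lemma multipliable_one_sub_mul_pow (a : ℂ) {q : ℂ} (hq : ‖q‖ < 1) :
    Multipliable fun n : ℕ => 1 - a * q ^ n := by
  simp_rw [sub_eq_add_neg]
  apply multipliable_one_add_of_summable
  simpa [norm_mul, norm_pow] using
    (summable_geometric_of_lt_one (norm_nonneg q) hq).mul_left ‖a‖

lemma qPochhammer_eq_mul_sq (a : ℂ) {q : ℂ} (hq : ‖q‖ < 1) :
    qPochhammer a q = qPochhammer a (q ^ 2) * qPochhammer (a * q) (q ^ 2) := by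
  have hq2 : ‖q ^ 2‖ < 1 := by simpa [norm_pow] using pow_lt_one₀ (norm_nonneg q) hq two_ne_zero
  have heven (k : ℕ) : 1 - a * q ^ (2 * k) = 1 - a * (q ^ 2) ^ k := by rw [pow_mul]
  have hodd (k : ℕ) : 1 - a * q ^ (2 * k + 1) = 1 - a * q * (q ^ 2) ^ k := by
    rw [pow_succ, pow_mul]; ring
  rw [qPochhammer, ← tprod_even_mul_odd (f := fun n => 1 - a * q ^ n)]
  · simp only [heven, hodd]
    rfl
  · simpa only [heven] using multipliable_one_sub_mul_pow a hq2
  · simpa only [hodd] using multipliable_one_sub_mul_pow (a * q) hq2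

lemma tprod_one_sub_mul_pow_mul₃ (a b c : ℂ) {q : ℂ} (hq : ‖q‖ < 1) :
    ∏' n : ℕ, ((1 - a * q ^ n) * (1 - b * q ^ n) * (1 - c * q ^ n)) =
      qPochhammer a q * qPochhammer b q * qPochhammer c q := by
  have (x : ℂ) := multipliable_one_sub_mul_pow x hq
  rw [((this a).mul (this b)).tprod_mul (this c), (this a).tprod_mul (this b)]
  rfl

section ProductFormulas

variable (τ : UpperHalfPlane) (u : ℂ)

lemma coe_halfH : (halfH τ : ℂ) = τ / 2 := rfl

lemma norm_ee_coe_lt_one : ‖ee τ‖ < 1 := norm_ee_lt_one τ.im_pos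

lemma dedekindEta_eq_eta : dedekindEta τ = ModularForm.eta τ := by
  rw [dedekindEta, ModularForm.eta]
  congr 1
  · simp only [ee, Function.Periodic.qParam]
    congr 1
    push_cast
    ring
  · refine tprod_congr fun n => ?_
    rw [ModularForm.eta_q_eq_pow, ← ee, ← ee_nat_mul]
    push_cast
    rfl

lemma dedekindEta_ne_zero : dedekindEta τ ≠ 0 := by
  rw [dedekindEta_eq_eta]
  exact ModularForm.eta_ne_zero τ.im_pos

lemma dedekindEta_eq_qPochhammer : dedekindEta τ = ee (τ / 24) * qPochhammer (ee τ) (ee τ) := by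
  rw [dedekindEta, qPochhammer]
  congr 1
  refine tprod_congr fun n => ?_
  rw [add_mul, one_mul, ee_add, ee_nat_mul, mul_comm]

lemma th01_eq_qPochhammer : th01 τ u = qPochhammer (ee τ) (ee τ) *
    qPochhammer (ee (τ / 2) * ee u) (ee τ) * qPochhammer (ee (τ / 2) * ee (-u)) (ee τ) := by
  rw [th01, ← tprod_one_sub_mul_pow_mul₃ _ _ _ (norm_ee_coe_lt_one τ)]
  refine tprod_congr fun n => ?_
  rw [add_mul, add_mul, one_mul, one_div_mul_eq_div, ee_add, ee_add, ee_nat_mul]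
  ring

lemma th11_eq_qPochhammer : th11 τ u = -(ee (τ / 8) * ee (-u / 2)) *
    (qPochhammer (ee u) (ee τ) * qPochhammer (ee τ * ee (-u)) (ee τ) *
      qPochhammer (ee τ) (ee τ)) := by
  rw [th11, ← tprod_one_sub_mul_pow_mul₃ _ _ _ (norm_ee_coe_lt_one τ)]
  congr 1
  refine tprod_congr fun n => ?_
  rw [add_mul, one_mul, ee_add, ee_nat_mul]
  ring

end ProductFormulas

lemma th11_halfH_mul_dedekindEta_sq (τ : UpperHalfPlane) (u : ℂ) :
    th11 (halfH τ) u * dedekindEta τ ^ 2 = dedekindEta (halfH τ) * (th01 τ u * th11 τ u) := by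
  have hx : ‖ee (τ / 2)‖ < 1 := norm_ee_coe_lt_one (halfH τ)
  have hq : ee τ = ee (τ / 2) ^ 2 := (ee_half_sq τ).symm
  -- all prefactors are powers of `q^{1/48}`
  have hpow (k : ℕ) (w : ℂ) (hw : w = k * (τ / 48)) : ee w = ee (τ / 48) ^ k := by
    rw [hw, ee_nat_mul]
  rw [th11_eq_qPochhammer, dedekindEta_eq_qPochhammer, th01_eq_qPochhammer, th11_eq_qPochhammer,
    dedekindEta_eq_qPochhammer, coe_halfH, qPochhammer_eq_mul_sq _ hx,
    qPochhammer_eq_mul_sq _ hx, qPochhammer_eq_mul_sq _ hx, hq, hpow 3 (τ / 2 / 8) (by ring),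
    hpow 2 (τ / 24) (by ring), hpow 1 (τ / 2 / 24) (by ring), hpow 6 (τ / 8) (by ring)]
  ring_nf

/-- The halving identity `φ11(τ/2, z) = φ01(τ,z) · φ11(τ,z)`. -/
theorem phi11_halving (τ : UpperHalfPlane) (z : Fin 12 → ℂ) :
    phi11 (halfH τ) z = phi01 τ z * phi11 τ z := by
  have hη := dedekindEta_ne_zero τ
  have hη' := dedekindEta_ne_zero (halfH τ)
  have hθ (u : ℂ) : th11 (halfH τ) u =
      dedekindEta (halfH τ) / dedekindEta τ ^ 2 * (th01 τ u * th11 τ u) := by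
    rw [div_mul_eq_mul_div, ← th11_halfH_mul_dedekindEta_sq,
      mul_div_cancel_right₀ _ (pow_ne_zero 2 hη)]
  simp only [phi11, phi01, hθ, Finset.prod_mul_distrib, Finset.prod_const, Finset.card_univ,
    Fintype.card_fin]
  field_simp
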